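/- Strip maps transitions of translated program rules not involving f to valid transitions: if C^J ↦_rf D^J by a translated rule rf whose matched head constraints all have justification sets not containing f, then strip(f, C^J) ↦_rf strip(f, D^J) is also a valid transition with the same rule. -/

import Mathlib

variable {C J : Type*} [DecidableEq C] [DecidableEq J]

/-- Annotated constraints of CHR with justifications, including the reserved
`rem` and `kill` constraints. `user c F` is a (non-reserved) constraint `c`
annotated with justification set `F`; `rem c Fc F` remembers the removed
constraint `c^{Fc}` and is itself annotated with `F`; `kill f` requests
logical retraction of justification `f`. -/
inductive AC (C J : Type*) where
  | user : C → Finset J → AC C J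
  | rem : C → Finset J → Finset J → AC C J
  | kill : J → AC C J
deriving DecidableEq

/-- The kill rule: `kill(f) \ G^F ⇔ f ∈ F | true`, for non-reserved `G`. -/
def KillStep (S T : Multiset (AC C J)) : Prop :=
  ∃ (f : J) (c : C) (F : Finset J) (G : Multiset (AC C J)),
    f ∈ F ∧ S = AC.kill f ::ₘ AC.user c F ::ₘ G ∧ T = AC.kill f ::ₘ G

/-- The revive rule: `kill(f) \ rem(G^{F_c})^F ⇔ f ∈ F | G^{F_c}`. -/
def ReviveStep (S T : Multiset (AC C J)) : Prop :=
  ∃ (f : J) (c : C) (Fc F : Finset J) (G : Multiset (AC C J)),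
    f ∈ F ∧ S = AC.kill f ::ₘ AC.rem c Fc F ::ₘ G ∧
      T = AC.kill f ::ₘ AC.user c Fc ::ₘ G

/-- A state contains at most one `kill(f)` constraint per justification `f`. -/
def AtMostOneKill (S : Multiset (AC C J)) : Prop :=
  ∀ f : J, S.count (AC.kill f) ≤ 1

/-- The strip mapping on a single annotated constraint: non-reserved
constraints whose annotation contains `f` are deleted; a `rem` constraint
whose outer annotation contains `f` is unwrapped to the strip of the
remembered constraint; everything else is unchanged. -/
def stripOne (f : J) : AC C J → Multiset (AC C J)
  | AC.user c F => if f ∈ F then 0 else {AC.user c F}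
  | AC.rem c Fc F =>
      if f ∈ F then (if f ∈ Fc then 0 else {AC.user c Fc})
      else {AC.rem c Fc F}
  | AC.kill g => {AC.kill g}

/-- The strip mapping on states (multisets of annotated constraints). -/
def strip (f : J) (S : Multiset (AC C J)) : Multiset (AC C J) :=
  S.bind (stripOne f)

/-- A simpagation rule: kept head, removed head, guard and body (no built-in
constraints in the body, no reserved symbols in the head). -/
structure Rule (C : Type*) where
  kept : Multiset C
  removed : Multiset C
  guard : Prop
  body : Multiset C

/-- Transition with the translated rule `rf` of a program rule `r`: removed
constraints are remembered via `rem`, and all produced constraints are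
annotated with the union `F` of the head justification sets. -/
def JStep (r : Rule C) (S T : Multiset (AC C J)) : Prop :=
  r.guard ∧ ∃ (K R : Multiset (C × Finset J)) (G : Multiset (AC C J)),
    K.map Prod.fst = r.kept ∧ R.map Prod.fst = r.removed ∧
    S = K.map (fun p => AC.user p.1 p.2) +
        R.map (fun p => AC.user p.1 p.2) + G ∧
    T = K.map (fun p => AC.user p.1 p.2) +
        R.map (fun p => AC.rem p.1 p.2
          ((K.map Prod.snd).sup ∪ (R.map Prod.snd).sup)) +
        r.body.map (fun b => AC.user b
          ((K.map Prod.snd).sup ∪ (R.map Prod.snd).sup)) + G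

theorem Multiset.mem_sup_map_finset_iff {α β : Type*} [DecidableEq β] (M : Multiset α)
    (g : α → Finset β) (b : β) : b ∈ (M.map g).sup ↔ ∃ a ∈ M, b ∈ g a := by
  induction M using Multiset.induction with
  | empty => simp
  | cons a M ih => simp [ih]

section Strip

omit [DecidableEq C]

variable (f : J)

theorem strip_add (S T : Multiset (AC C J)) : strip f (S + T) = strip f S + strip f T :=
  Multiset.add_bind _ _ _

theorem strip_eq_self (S : Multiset (AC C J)) (h : ∀ a ∈ S, stripOne f a = {a}) :
    strip f S = S := by
  rw [strip, Multiset.bind_congr h, Multiset.bind_singleton, Multiset.map_id']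

theorem strip_map_eq_self {α : Type*} (M : Multiset α) (e : α → AC C J)
    (h : ∀ a ∈ M, stripOne f (e a) = {e a}) : strip f (M.map e) = M.map e :=
  strip_eq_self f _ fun _ hx => by
    obtain ⟨a, ha, rfl⟩ := Multiset.mem_map.1 hx
    exact h a ha

theorem stripOne_user_of_notMem {c : C} {F : Finset J} (hF : f ∉ F) :
    stripOne f (AC.user c F) = {AC.user c F} := by
  simp [stripOne, hF]

theorem stripOne_rem_of_notMem {c : C} {Fc F : Finset J} (hF : f ∉ F) :
    stripOne f (AC.rem c Fc F) = {AC.rem c Fc F} := by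
  simp [stripOne, hF]

end Strip

/-- Strip maps transitions of translated program rules not involving `f` to
valid transitions with the same rule: if the matched head constraints all
have justification sets not containing `f`, then stripping source and target
again yields a transition of the translated rule. -/
theorem strip_jstep_not_involving (r : Rule C) (f : J)
    (K R : Multiset (C × Finset J)) (G : Multiset (AC C J))
    (hg : r.guard)
    (hK : K.map Prod.fst = r.kept) (hR : R.map Prod.fst = r.removed)
    (hf : ∀ p ∈ K + R, f ∉ p.2) :
    JStep r
      (strip f (K.map (fun p => AC.user p.1 p.2) +
        R.map (fun p => AC.user p.1 p.2) + G))
      (strip f (K.map (fun p => AC.user p.1 p.2) +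
        R.map (fun p => AC.rem p.1 p.2
          ((K.map Prod.snd).sup ∪ (R.map Prod.snd).sup)) +
        r.body.map (fun b => AC.user b
          ((K.map Prod.snd).sup ∪ (R.map Prod.snd).sup)) + G)) := by
  have hF : f ∉ (K.map Prod.snd).sup ∪ (R.map Prod.snd).sup := by
    simp only [Finset.mem_union, Multiset.mem_sup_map_finset_iff, not_or, not_exists, not_and]
    exact ⟨fun p hp => hf p (Multiset.mem_add.2 (.inl hp)),
      fun p hp => hf p (Multiset.mem_add.2 (.inr hp))⟩
  have hKs : strip f (K.map fun p => AC.user p.1 p.2) = K.map fun p => AC.user p.1 p.2 :=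
    strip_map_eq_self f K _ fun p hp =>
      stripOne_user_of_notMem f (hf p (Multiset.mem_add.2 (.inl hp)))
  have hRs : strip f (R.map fun p => AC.user p.1 p.2) = R.map fun p => AC.user p.1 p.2 :=
    strip_map_eq_self f R _ fun p hp =>
      stripOne_user_of_notMem f (hf p (Multiset.mem_add.2 (.inr hp)))
  refine ⟨hg, K, R, strip f G, hK, hR, ?_, ?_⟩
  · rw [strip_add, strip_add, hKs, hRs]
  · rw [strip_add, strip_add, strip_add, hKs,
      strip_map_eq_self f R _ fun _ _ => stripOne_rem_of_notMem f hF,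
      strip_map_eq_self f r.body _ fun _ _ => stripOne_user_of_notMem f hF]
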